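/- Let T be a power partial isometry on a Hilbert space H and let Q be the orthogonal projection onto ⋂_{n≥1} T*^n H. Then for each n ≥ 1, the restriction of T^n to the range of (1 − TT*)Q is an isometry onto the range of (T^n T*^n − T^{n+1} T*^{n+1})Q. -/

import Mathlib

/-!
Each `T ^ n` is a partial isometry, so `‖T^n v‖ = ‖v‖` exactly when `v ∈ range T*^n`, and there
`T*^n T^n v = v`. From `‖T^m (T v)‖ = ‖v‖ ≥ ‖T v‖` one gets that `T` maps `range T*^(m+1)` into
`range T*^m`, so `K = ⋂ range T*^n` is invariant under `T` and `T*`. Hence `(1 - TT*)Q H ⊆ K`,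
on which `T^n` is isometric. Finally
`T^n T*^n - T^(n+1) T*^(n+1) = T^n (1 - TT*) T*^n`, where `T^n` and `T*^n` are mutually inverse
on `K` and `Q` is the identity on `K`, so the two ranges correspond under `T^n`.
-/

open ContinuousLinearMap

theorem pow_mul_pow_sub_pow_succ_mul_pow_succ {R : Type*} [Ring R] (a b : R) (n : ℕ) :
    a ^ n * b ^ n - a ^ (n + 1) * b ^ (n + 1) = a ^ n * (1 - a * b) * b ^ n := by
  rw [pow_succ, pow_succ', mul_sub, sub_mul, mul_one, mul_assoc, mul_assoc, mul_assoc]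

namespace ContinuousLinearMap

variable {𝕜 E F : Type*} [RCLike 𝕜]
  [NormedAddCommGroup E] [InnerProductSpace 𝕜 E] [CompleteSpace E]
  [NormedAddCommGroup F] [InnerProductSpace 𝕜 F] [CompleteSpace F]

def IsPartialIsometry (V : E →L[𝕜] F) : Prop := V ∘L adjoint V ∘L V = V

variable {V : E →L[𝕜] F}

theorem isPartialIsometry_adjoint_iff : IsPartialIsometry (adjoint V) ↔ IsPartialIsometry V := by
  simp only [IsPartialIsometry, adjoint_adjoint]
  rw [← adjoint.injective.eq_iff]
  simp [adjoint_comp, comp_assoc]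

namespace IsPartialIsometry

theorem apply_adjoint_apply_apply (hV : IsPartialIsometry V) (v : E) :
    V (adjoint V (V v)) = V v :=
  congrArg (· v) hV

theorem adjoint_apply_apply_of_mem_range (hV : IsPartialIsometry V) {v : E}
    (hv : v ∈ LinearMap.range (adjoint V : F →ₗ[𝕜] E)) : adjoint V (V v) = v := by
  obtain ⟨u, rfl⟩ := hv
  simpa using (isPartialIsometry_adjoint_iff.2 hV).apply_adjoint_apply_apply u

theorem norm_adjoint_apply_apply (hV : IsPartialIsometry V) (v : E) :
    ‖adjoint V (V v)‖ = ‖V v‖ := by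
  rw [norm_eq_sqrt_re_inner (𝕜 := 𝕜), norm_eq_sqrt_re_inner (𝕜 := 𝕜), adjoint_inner_left,
    hV.apply_adjoint_apply_apply]

theorem norm_sub_adjoint_apply_apply_sq (hV : IsPartialIsometry V) (v : E) :
    ‖v - adjoint V (V v)‖ ^ 2 = ‖v‖ ^ 2 - ‖V v‖ ^ 2 := by
  rw [norm_sub_sq (𝕜 := 𝕜), hV.norm_adjoint_apply_apply, adjoint_inner_right,
    inner_self_eq_norm_sq]
  ring

theorem norm_apply_le (hV : IsPartialIsometry V) (v : E) : ‖V v‖ ≤ ‖v‖ := by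
  rw [← pow_le_pow_iff_left₀ (norm_nonneg _) (norm_nonneg _) two_ne_zero, ← sub_nonneg,
    ← hV.norm_sub_adjoint_apply_apply_sq]
  positivity

theorem adjoint_apply_apply_eq_self_iff (hV : IsPartialIsometry V) {v : E} :
    adjoint V (V v) = v ↔ ‖V v‖ = ‖v‖ := by
  rw [eq_comm, ← sub_eq_zero, ← norm_eq_zero, ← sq_eq_zero_iff,
    hV.norm_sub_adjoint_apply_apply_sq, sub_eq_zero, eq_comm,
    sq_eq_sq₀ (norm_nonneg _) (norm_nonneg _)]

theorem norm_apply_of_mem_range_adjoint (hV : IsPartialIsometry V) {v : E}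
    (hv : v ∈ LinearMap.range (adjoint V : F →ₗ[𝕜] E)) : ‖V v‖ = ‖v‖ :=
  hV.adjoint_apply_apply_eq_self_iff.1 (hV.adjoint_apply_apply_of_mem_range hv)

end IsPartialIsometry

theorem adjoint_pow (T : E →L[𝕜] E) (n : ℕ) : adjoint (T ^ n) = adjoint T ^ n := by
  simp only [← star_eq_adjoint, star_pow]

def IsPowerPartialIsometry (T : E →L[𝕜] E) : Prop := ∀ n : ℕ, IsPartialIsometry (T ^ n)

theorem isPowerPartialIsometry_iff {T : E →L[𝕜] E} :
    IsPowerPartialIsometry T ↔ ∀ n : ℕ, T ^ n * adjoint T ^ n * T ^ n = T ^ n := by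
  simp only [IsPowerPartialIsometry, IsPartialIsometry, adjoint_pow]
  rfl

noncomputable def iInfRangeAdjointPow (T : E →L[𝕜] E) : Submodule 𝕜 E :=
  ⨅ n : ℕ, LinearMap.range ((adjoint T ^ (n + 1) : E →L[𝕜] E) : E →ₗ[𝕜] E)

namespace IsPowerPartialIsometry

variable {T : E →L[𝕜] E}

theorem apply_mem_range_adjoint_pow (hT : IsPowerPartialIsometry T) {m : ℕ} {v : E}
    (hv : v ∈ LinearMap.range ((adjoint T ^ (m + 1) : E →L[𝕜] E) : E →ₗ[𝕜] E)) :
    T v ∈ LinearMap.range ((adjoint T ^ m : E →L[𝕜] E) : E →ₗ[𝕜] E) := by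
  rw [← adjoint_pow] at hv ⊢
  have hTv : (T ^ (m + 1)) v = (T ^ m) (T v) := by rw [pow_succ, mul_apply_eq_comp]
  have h_le : ‖T v‖ ≤ ‖v‖ := by simpa using (hT 1).norm_apply_le v
  have h_eq : ‖(T ^ m) (T v)‖ = ‖T v‖ := by
    refine le_antisymm ((hT m).norm_apply_le _) ?_
    rwa [← hTv, (hT (m + 1)).norm_apply_of_mem_range_adjoint hv]
  exact ⟨_, (hT m).adjoint_apply_apply_eq_self_iff.2 h_eq⟩

end IsPowerPartialIsometry

section iInfRangeAdjointPow

variable {T : E →L[𝕜] E} {v : E}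

theorem mem_range_adjoint_pow_of_mem_iInfRangeAdjointPow (hv : v ∈ iInfRangeAdjointPow T)
    (n : ℕ) : v ∈ LinearMap.range ((adjoint T ^ n : E →L[𝕜] E) : E →ₗ[𝕜] E) := by
  cases n with
  | zero => exact ⟨v, by simp⟩
  | succ n => exact Submodule.mem_iInf _ |>.1 hv n

theorem adjoint_apply_mem_iInfRangeAdjointPow (hv : v ∈ iInfRangeAdjointPow T) :
    adjoint T v ∈ iInfRangeAdjointPow T := by
  refine Submodule.mem_iInf _ |>.2 fun n => ?_
  obtain ⟨u, rfl⟩ := mem_range_adjoint_pow_of_mem_iInfRangeAdjointPow hv n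
  exact ⟨u, by simp [pow_succ']⟩

theorem IsPowerPartialIsometry.apply_mem_iInfRangeAdjointPow (hT : IsPowerPartialIsometry T)
    (hv : v ∈ iInfRangeAdjointPow T) : T v ∈ iInfRangeAdjointPow T :=
  Submodule.mem_iInf _ |>.2 fun n =>
    hT.apply_mem_range_adjoint_pow (mem_range_adjoint_pow_of_mem_iInfRangeAdjointPow hv (n + 2))

theorem IsPowerPartialIsometry.pow_apply_mem_iInfRangeAdjointPow (hT : IsPowerPartialIsometry T)
    (n : ℕ) (hv : v ∈ iInfRangeAdjointPow T) : (T ^ n) v ∈ iInfRangeAdjointPow T := by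
  simpa only [← toLinearMap_pow, coe_coe] using Module.End.pow_apply_mem_of_forall_mem n
    (fun _ => hT.apply_mem_iInfRangeAdjointPow) v hv

theorem adjoint_pow_apply_mem_iInfRangeAdjointPow (n : ℕ) (hv : v ∈ iInfRangeAdjointPow T) :
    (adjoint T ^ n) v ∈ iInfRangeAdjointPow T := by
  simpa only [← toLinearMap_pow, coe_coe] using Module.End.pow_apply_mem_of_forall_mem n
    (fun _ => adjoint_apply_mem_iInfRangeAdjointPow) v hv

theorem IsPowerPartialIsometry.adjoint_pow_apply_pow_apply_of_mem_iInfRangeAdjointPow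
    (hT : IsPowerPartialIsometry T) (n : ℕ) (hv : v ∈ iInfRangeAdjointPow T) :
    (adjoint T ^ n) ((T ^ n) v) = v := by
  rw [← adjoint_pow]
  exact (hT n).adjoint_apply_apply_of_mem_range <| by
    rw [adjoint_pow]
    exact mem_range_adjoint_pow_of_mem_iInfRangeAdjointPow hv n

theorem IsPowerPartialIsometry.norm_pow_apply_of_mem_iInfRangeAdjointPow
    (hT : IsPowerPartialIsometry T) (n : ℕ) (hv : v ∈ iInfRangeAdjointPow T) :
    ‖(T ^ n) v‖ = ‖v‖ := by
  rw [← (hT n).adjoint_apply_apply_eq_self_iff, adjoint_pow]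
  exact hT.adjoint_pow_apply_pow_apply_of_mem_iInfRangeAdjointPow n hv

end iInfRangeAdjointPow

end ContinuousLinearMap

theorem pow_isometry_between_ranges_general
    {H : Type*} [NormedAddCommGroup H] [InnerProductSpace ℂ H] [CompleteSpace H]
    (T : H →L[ℂ] H)
    (hT : ∀ n : ℕ, T ^ n * (adjoint T) ^ n * T ^ n = T ^ n)
    (Q : H →L[ℂ] H)
    -- `Q` is the orthogonal projection onto `⋂_{n ≥ 1} T*^n H`:
    (hQfix : ∀ x ∈ ⨅ n : ℕ, LinearMap.range (((adjoint T) ^ (n + 1) : H →L[ℂ] H) : H →ₗ[ℂ] H), Q x = x)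
    (hQrange : ∀ x : H, Q x ∈ ⨅ n : ℕ, LinearMap.range (((adjoint T) ^ (n + 1) : H →L[ℂ] H) : H →ₗ[ℂ] H)) :
    ∀ n : ℕ, 1 ≤ n →
      (∀ y ∈ LinearMap.range (((1 - T * adjoint T) * Q : H →L[ℂ] H) : H →ₗ[ℂ] H), ‖(T ^ n) y‖ = ‖y‖) ∧
      (T ^ n) '' (LinearMap.range (((1 - T * adjoint T) * Q : H →L[ℂ] H) : H →ₗ[ℂ] H) : Set H) =
        (LinearMap.range
          (((T ^ n * (adjoint T) ^ n - T ^ (n + 1) * (adjoint T) ^ (n + 1)) * Q :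
            H →L[ℂ] H) : H →ₗ[ℂ] H) :
            Set H) := by
  replace hT : IsPowerPartialIsometry T := isPowerPartialIsometry_iff.2 hT
  replace hQfix : ∀ x ∈ iInfRangeAdjointPow T, Q x = x := hQfix
  replace hQrange : ∀ x, Q x ∈ iInfRangeAdjointPow T := hQrange
  have hdefect_mem : ∀ x, ((1 - T * adjoint T) * Q) x ∈ iInfRangeAdjointPow T := fun x => by
    simpa only [sub_mul, one_mul, sub_apply, mul_apply_eq_comp] using sub_mem (hQrange x)
      (hT.apply_mem_iInfRangeAdjointPow (adjoint_apply_mem_iInfRangeAdjointPow (hQrange x)))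
  intro n _
  refine ⟨?_, ?_⟩
  · rintro y ⟨x, rfl⟩
    exact hT.norm_pow_apply_of_mem_iInfRangeAdjointPow n (hdefect_mem x)
  · rw [pow_mul_pow_sub_pow_succ_mul_pow_succ]
    ext z
    constructor
    · rintro ⟨_, ⟨x, rfl⟩, rfl⟩
      refine ⟨(T ^ n) (Q x), ?_⟩
      simp only [coe_coe, mul_apply_eq_comp,
        hQfix _ (hT.pow_apply_mem_iInfRangeAdjointPow n (hQrange x)),
        hT.adjoint_pow_apply_pow_apply_of_mem_iInfRangeAdjointPow n (hQrange x)]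
    · rintro ⟨x, rfl⟩
      refine ⟨_, ⟨(adjoint T ^ n) (Q x), rfl⟩, ?_⟩
      simp only [coe_coe, mul_apply_eq_comp,
        hQfix _ (adjoint_pow_apply_mem_iInfRangeAdjointPow n (hQrange x))]

/-- For a power partial isometry `T` with `Q` the orthogonal projection onto
`⋂_{n≥1} T*^n H`, for each `n ≥ 1` the restriction of `T^n` to the range of
`(1 − TT*)Q` is an isometry onto the range of `(T^n T*^n − T^{n+1} T*^{n+1})Q`. -/
theorem pow_isometry_between_ranges
    {H : Type*} [NormedAddCommGroup H] [InnerProductSpace ℂ H] [CompleteSpace H]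
    (T : H →L[ℂ] H)
    (hT : ∀ n : ℕ, T ^ n * (adjoint T) ^ n * T ^ n = T ^ n)
    (Q : H →L[ℂ] H)
    -- `Q` is the orthogonal projection onto `⋂_{n ≥ 1} T*^n H`:
    (hQsa : IsSelfAdjoint Q)
    (hQfix : ∀ x ∈ ⨅ n : ℕ, LinearMap.range (((adjoint T) ^ (n + 1) : H →L[ℂ] H) : H →ₗ[ℂ] H), Q x = x)
    (hQrange : ∀ x : H, Q x ∈ ⨅ n : ℕ, LinearMap.range (((adjoint T) ^ (n + 1) : H →L[ℂ] H) : H →ₗ[ℂ] H)) :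
    ∀ n : ℕ, 1 ≤ n →
      (∀ y ∈ LinearMap.range (((1 - T * adjoint T) * Q : H →L[ℂ] H) : H →ₗ[ℂ] H), ‖(T ^ n) y‖ = ‖y‖) ∧
      (T ^ n) '' (LinearMap.range (((1 - T * adjoint T) * Q : H →L[ℂ] H) : H →ₗ[ℂ] H) : Set H) =
        (LinearMap.range
          (((T ^ n * (adjoint T) ^ n - T ^ (n + 1) * (adjoint T) ^ (n + 1)) * Q :
            H →L[ℂ] H) : H →ₗ[ℂ] H) :
            Set H) :=
  pow_isometry_between_ranges_general T hT Q hQfix hQrange
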